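/- Consider the iterative pruning procedure Prune(c) applied to G_F = G − F: at each step i, remove any set Sᵢ of at most half the remaining vertices whose vertex expansion in the current graph is below c·φ. Then for all 0 ≤ j < m (where m is the number of iterations), the neighborhood in G_F of ∪_{i=0}^{j} Sᵢ has size at most c·φ·|∪_{i=0}^{j} Sᵢ|. -/
import Mathlib


open Finset

variable {V : Type*} [Fintype V] [DecidableEq V]

/-- `vertOut G A S` is the set of vertices of `A` outside `S` that are adjacent
(in `G`) to some vertex of `S` — the outer vertex boundary of `S` within `A`. -/
def vertOut (G : SimpleGraph V) [DecidableRel G.Adj] (A S : Finset V) : Finset V :=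
  (A \ S).filter fun v => ∃ s ∈ S, G.Adj s v

/-- `remaining G F S i` is the vertex set of the current graph after `i` steps of
the pruning procedure `Prune(c)` applied to `G_F = G − F`: start from `V ∖ F`
and successively remove the pruned sets `S 0, S 1, …, S (i-1)`. -/
def remaining (F : Finset V) (S : ℕ → Finset V) : ℕ → Finset V
  | 0 => Finset.univ \ F
  | i + 1 => remaining F S i \ S i

lemma remaining_eq (F : Finset V) (S : ℕ → Finset V) (i : ℕ) :
    remaining F S i = (Finset.univ \ F) \ (Finset.range i).biUnion S := by
  induction i with
  | zero => simp [remaining]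
  | succ n ih =>
      rw [remaining, ih, Finset.range_add_one, Finset.biUnion_insert]
      ext v
      simp only [Finset.mem_sdiff, Finset.mem_union]
      tauto

/-- In the pruning procedure `Prune(c)` applied to `G_F = G − F`
(at each step `i` a set `Sᵢ` of at most half the remaining vertices whose
vertex expansion in the current graph is below `c·φ` is removed),
for all `0 ≤ j < m` the neighborhood in `G_F` of `∪_{i=0}^{j} Sᵢ` has size at
most `c·φ·|∪_{i=0}^{j} Sᵢ|`. -/
theorem prune_union_boundary_le
    (G : SimpleGraph V) [DecidableRel G.Adj]
    (F : Finset V) (φ c : ℝ) (hφ : 0 < φ) (hc0 : 0 < c) (hc1 : c < 1)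
    (hexp : ∀ S : Finset V, S.Nonempty → 2 * S.card ≤ Fintype.card V →
      φ * (S.card : ℝ) ≤ ((vertOut G Finset.univ S).card : ℝ))
    (m : ℕ) (S : ℕ → Finset V)
    (hsub : ∀ i < m, S i ⊆ remaining F S i)
    (hne : ∀ i < m, (S i).Nonempty)
    (hhalf : ∀ i < m, 2 * (S i).card ≤ (remaining F S i).card)
    (hlowexp : ∀ i < m,
      ((vertOut G (remaining F S i) (S i)).card : ℝ) < c * φ * ((S i).card : ℝ)) :
    ∀ j < m,
      ((vertOut G (Finset.univ \ F) ((Finset.range (j + 1)).biUnion S)).card : ℝ) ≤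
        c * φ * (((Finset.range (j + 1)).biUnion S).card : ℝ) := by
  intro j hj
  set U := (Finset.range (j + 1)).biUnion S with hU
  -- subset of union of the per-step boundaries
  have hsubset : vertOut G (Finset.univ \ F) U ⊆
      (Finset.range (j + 1)).biUnion (fun i => vertOut G (remaining F S i) (S i)) := by
    intro v hv
    rw [vertOut, Finset.mem_filter, Finset.mem_sdiff] at hv
    obtain ⟨⟨hvF, hvU⟩, s, hsU, hadj⟩ := hv
    rw [hU, Finset.mem_biUnion] at hsU
    obtain ⟨i, hi, hsi⟩ := hsU
    refine Finset.mem_biUnion.2 ⟨i, hi, ?_⟩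
    rw [vertOut, Finset.mem_filter, Finset.mem_sdiff]
    refine ⟨⟨?_, ?_⟩, s, hsi, hadj⟩
    · rw [remaining_eq, Finset.mem_sdiff]
      refine ⟨hvF, fun hmem => hvU ?_⟩
      obtain ⟨k, hk, hvk⟩ := Finset.mem_biUnion.1 hmem
      exact Finset.mem_biUnion.2 ⟨k, Finset.mem_range.2 (lt_trans (Finset.mem_range.1 hk)
        (Finset.mem_range.1 hi)), hvk⟩
    · exact fun hvS => hvU (Finset.mem_biUnion.2 ⟨i, hi, hvS⟩)
  -- pairwise disjointness of the S i, i ≤ j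
  have hdisj : ∀ i₁ ∈ Finset.range (j + 1), ∀ i₂ ∈ Finset.range (j + 1), i₁ ≠ i₂ →
      Disjoint (S i₁) (S i₂) := by
    have key : ∀ a b, a < b → b < m → Disjoint (S a) (S b) := by
      intro a b hab hbm
      have hb := hsub b hbm
      rw [remaining_eq] at hb
      rw [Finset.disjoint_left]
      intro x hxa hxb
      have := hb hxb
      rw [Finset.mem_sdiff] at this
      exact this.2 (Finset.mem_biUnion.2 ⟨a, Finset.mem_range.2 hab, hxa⟩)
    intro i₁ h₁ i₂ h₂ hne'
    have h₁m : i₁ < m := lt_of_lt_of_le (Finset.mem_range.1 h₁) hj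
    have h₂m : i₂ < m := lt_of_lt_of_le (Finset.mem_range.1 h₂) hj
    rcases lt_or_gt_of_ne hne' with h | h
    · exact key i₁ i₂ h h₂m
    · exact (key i₂ i₁ h h₁m).symm
  have hcard : U.card = ∑ i ∈ Finset.range (j + 1), (S i).card :=
    Finset.card_biUnion hdisj
  calc ((vertOut G (Finset.univ \ F) U).card : ℝ)
      ≤ (((Finset.range (j + 1)).biUnion
          (fun i => vertOut G (remaining F S i) (S i))).card : ℝ) := by
        exact_mod_cast Finset.card_le_card hsubset
    _ ≤ ∑ i ∈ Finset.range (j + 1), ((vertOut G (remaining F S i) (S i)).card : ℝ) := by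
        exact_mod_cast Finset.card_biUnion_le
    _ ≤ ∑ i ∈ Finset.range (j + 1), c * φ * ((S i).card : ℝ) := by
        refine Finset.sum_le_sum fun i hi => ?_
        exact le_of_lt (hlowexp i (lt_of_lt_of_le (Finset.mem_range.1 hi) hj))
    _ = c * φ * ((U.card : ℝ)) := by
        rw [hcard, ← Finset.mul_sum]; push_cast; ring
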